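/- Let n ≥ 1 and let λ₀, λ₁, …, λₙ be pairwise distinct complex numbers, all with nonzero real part. For 1 ≤ r ≤ n define h_r(t) = ∑_{j=0}^{r} g_t(λⱼ) · ∏_{0 ≤ k ≤ r, k≠j} (λⱼ − λₖ)⁻¹ for t ≠ 0, and h_0(t) = g_t(λ₀). Then for every t ≠ 0 the integral ∫_{−∞}^{∞} h_{n−1}(s) · g_{t−s}(λₙ) ds converges absolutely and equals h_n(t). (Equivalently, for t ≠ 0 the n-th divided difference of g_t at λ₀, …, λₙ equals the (n+1)-fold convolution g_·(λ₀) ∗ ⋯ ∗ g_·(λₙ) evaluated at t.) -/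

import Mathlib

/-!
`g_·(λ)` is the bounded Green function of `d/dt − λ`. For `λ ≠ μ` the convolution
`g_·(λ) ∗ g_·(μ)` is an integral of `e^{μt} e^{(λ−μ)s}` over an interval or a half-line, and
equals `(g_t(λ) − g_t(μ)) / (λ − μ)`; since `g_{−t}(−λ) = −g_t(λ)`, only the cases `Re λ < 0`
need to be computed. On the other hand, divided differences satisfy
`f[λ₀, …, λₙ] = (j ↦ (f(λⱼ) − f(λₙ)) / (λⱼ − λₙ))[λ₀, …, λ_{n−1}]`, because
`∑ⱼ ∏_{k ≠ j} (λⱼ − λₖ)⁻¹ = 0` (the top coefficient of the Lagrange interpolant of `1`).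
Integrating `h_{n−1}(s) g_{t−s}(λₙ)` term by term therefore gives `h_n(t)`.
-/

open Finset MeasureTheory

/-- The kernel of Green's function of the bounded solutions problem:
`g t λ = e^{λt}` if `t > 0` and `Re λ < 0`, `g t λ = −e^{λt}` if `t < 0` and
`Re λ > 0`, and `g t λ = 0` otherwise. -/
noncomputable def g (t : ℝ) (lam : ℂ) : ℂ :=
  if 0 < t ∧ lam.re < 0 then Complex.exp (lam * t)
  else if t < 0 ∧ 0 < lam.re then -Complex.exp (lam * t)
  else 0

/-- `hg lam r t` is the `r`-th divided difference of `g_t` at the points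
`lam 0, …, lam r`: `∑_{j=0}^{r} g_t(lam j) ∏_{k ≤ r, k ≠ j} (lam j − lam k)⁻¹`. -/
noncomputable def hg (lam : ℕ → ℂ) (r : ℕ) (t : ℝ) : ℂ :=
  ∑ j ∈ Finset.range (r + 1),
    g t (lam j) * ∏ k ∈ (Finset.range (r + 1)).erase j, (lam j - lam k)⁻¹

theorem sum_prod_sub_inv_eq_zero {F ι : Type*} [Field F] [DecidableEq ι] {s : Finset ι}
    {v : ι → F} (hvs : Set.InjOn v s) (hs : 1 < #s) :
    ∑ i ∈ s, ∏ j ∈ s.erase i, (v i - v j)⁻¹ = 0 := by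
  have h := Lagrange.coeff_eq_sum hvs (P := 1) (by
    rw [Polynomial.degree_one]; exact_mod_cast (by omega : 0 < #s))
  rw [Polynomial.coeff_one, if_neg (by omega)] at h
  simpa [prod_inv_distrib, div_eq_mul_inv] using h.symm

theorem sum_mul_prod_sub_inv_range_succ {F : Type*} [Field F] {x : ℕ → F} (f : ℕ → F) {n : ℕ}
    (hn : 1 ≤ n) (hx : Set.InjOn x (range (n + 1))) :
    ∑ j ∈ range (n + 1), f j * ∏ k ∈ (range (n + 1)).erase j, (x j - x k)⁻¹ =
      ∑ j ∈ range n, (f j - f n) * (x j - x n)⁻¹ * ∏ k ∈ (range n).erase j, (x j - x k)⁻¹ := by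
  set w := fun j => ∏ k ∈ (range (n + 1)).erase j, (x j - x k)⁻¹
  have hw (j : ℕ) (hj : j ∈ range n) :
      w j = (x j - x n)⁻¹ * ∏ k ∈ (range n).erase j, (x j - x k)⁻¹ := by
    simp only [w]
    rw [range_add_one, erase_insert_of_ne (by grind), prod_insert (by simp)]
  have hsum : ∑ j ∈ range n, w j = -w n := by
    rw [eq_neg_iff_add_eq_zero, ← sum_range_succ]
    exact sum_prod_sub_inv_eq_zero hx (by simp; omega)
  calc ∑ j ∈ range (n + 1), f j * w j
      = ∑ j ∈ range n, (f j - f n) * w j := by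
        rw [sum_range_succ, ← neg_neg (w n), ← hsum, mul_neg, mul_sum, ← sum_neg_distrib,
          ← sum_add_distrib]
        exact sum_congr rfl fun j _ => by ring
    _ = _ := sum_congr rfl fun j hj => by rw [hw j hj, mul_assoc]

open Complex

theorem g_of_re_neg {lam : ℂ} (h : lam.re < 0) (s : ℝ) :
    g s lam = if 0 < s then cexp (lam * s) else 0 := by
  simp [g, h, h.le.not_gt]

theorem g_of_re_pos {lam : ℂ} (h : 0 < lam.re) (s : ℝ) :
    g s lam = if s < 0 then -cexp (lam * s) else 0 := by
  simp [g, h, h.not_gt]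

theorem g_neg_neg (t : ℝ) (lam : ℂ) : g (-t) (-lam) = -g t lam := by
  simp only [g, neg_re, neg_pos, neg_lt_zero, ofReal_neg, neg_mul_neg]
  split_ifs <;> first | simp | (exfalso; linarith)

theorem exp_mul_mul_exp_mul_sub (lam mu : ℂ) (t s : ℝ) :
    cexp (lam * s) * cexp (mu * ↑(t - s)) = cexp (mu * t) * cexp ((lam - mu) * s) := by
  rw [← Complex.exp_add, ← Complex.exp_add]
  push_cast
  ring_nf

theorem exp_mul_mul_exp_sub_mul (lam mu : ℂ) (t : ℝ) :
    cexp (mu * t) * cexp ((lam - mu) * t) = cexp (lam * t) := by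
  rw [← Complex.exp_add]
  ring_nf

theorem g_conv_of_re_neg_of_re_neg {lam mu : ℂ} (hl : lam.re < 0) (hm : mu.re < 0)
    (hne : lam ≠ mu) (t : ℝ) :
    Integrable (fun s : ℝ => g s lam * g (t - s) mu) ∧
      ∫ s, g s lam * g (t - s) mu = (g t lam - g t mu) * (lam - mu)⁻¹ := by
  have hfun : (fun s : ℝ => g s lam * g (t - s) mu) =
      (Set.Ioo 0 t).indicator fun s => cexp (mu * t) * cexp ((lam - mu) * s) := by
    ext s
    simp only [g_of_re_neg hl, g_of_re_neg hm, Set.indicator_apply, Set.mem_Ioo, sub_pos]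
    split_ifs <;> first | tauto | exact exp_mul_mul_exp_mul_sub .. | simp
  rw [hfun]
  rcases le_or_gt t 0 with ht | ht
  · simp [g_of_re_neg hl, g_of_re_neg hm, ht.not_gt]
  have hcont : Continuous fun s : ℝ => cexp (mu * t) * cexp ((lam - mu) * s) := by fun_prop
  refine ⟨(integrable_indicator_iff measurableSet_Ioo).2
    ((hcont.integrableOn_Icc (a := 0) (b := t)).mono_set Set.Ioo_subset_Icc_self), ?_⟩
  rw [integral_indicator measurableSet_Ioo, ← integral_Ioc_eq_integral_Ioo,
    ← intervalIntegral.integral_of_le ht.le, intervalIntegral.integral_const_mul,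
    integral_exp_mul_complex (sub_ne_zero.2 hne), g_of_re_neg hl, g_of_re_neg hm, if_pos ht,
    if_pos ht, ofReal_zero, mul_zero, Complex.exp_zero, div_eq_mul_inv, ← mul_assoc, mul_sub,
    exp_mul_mul_exp_sub_mul, mul_one]

theorem g_conv_of_re_neg_of_re_pos {lam mu : ℂ} (hl : lam.re < 0) (hm : 0 < mu.re)
    {t : ℝ} (ht : t ≠ 0) :
    Integrable (fun s : ℝ => g s lam * g (t - s) mu) ∧
      ∫ s, g s lam * g (t - s) mu = (g t lam - g t mu) * (lam - mu)⁻¹ := by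
  have hre : (lam - mu).re < 0 := by rw [sub_re]; linarith
  have hfun : (fun s : ℝ => g s lam * g (t - s) mu) =
      (Set.Ioi (max 0 t)).indicator fun s => -cexp (mu * t) * cexp ((lam - mu) * s) := by
    ext s
    simp only [g_of_re_neg hl, g_of_re_pos hm, Set.indicator_apply, Set.mem_Ioi, max_lt_iff,
      sub_neg]
    split_ifs <;> first | tauto | simp [← exp_mul_mul_exp_mul_sub]
  rw [hfun]
  refine ⟨(integrable_indicator_iff measurableSet_Ioi).2
    ((integrableOn_exp_mul_complex_Ioi hre _).const_mul _), ?_⟩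
  rw [integral_indicator measurableSet_Ioi, integral_const_mul,
    integral_exp_mul_complex_Ioi hre, g_of_re_neg hl, g_of_re_pos hm]
  rcases ht.lt_or_gt with ht | ht
  · rw [max_eq_left ht.le, if_neg ht.not_gt, if_pos ht, ofReal_zero, mul_zero, Complex.exp_zero]
    ring
  · rw [max_eq_right ht.le, if_pos ht, if_neg ht.not_gt, ← exp_mul_mul_exp_sub_mul lam mu]
    ring

theorem g_conv_of_g_conv_neg {lam mu : ℂ} {t : ℝ}
    (h : Integrable (fun s : ℝ => g s (-lam) * g (-t - s) (-mu)) ∧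
      ∫ s, g s (-lam) * g (-t - s) (-mu) = (g (-t) (-lam) - g (-t) (-mu)) * (-lam - -mu)⁻¹) :
    Integrable (fun s : ℝ => g s lam * g (t - s) mu) ∧
      ∫ s, g s lam * g (t - s) mu = (g t lam - g t mu) * (lam - mu)⁻¹ := by
  have hfun : (fun s : ℝ => g s lam * g (t - s) mu) =
      fun s => g (-s) (-lam) * g (-t - -s) (-mu) := by
    ext s
    rw [show -t - -s = -(t - s) by ring, g_neg_neg, g_neg_neg, neg_mul_neg]
  rw [hfun, integral_neg_eq_self (fun s => g s (-lam) * g (-t - s) (-mu)), h.2, g_neg_neg,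
    g_neg_neg]
  refine ⟨h.1.comp_neg, ?_⟩
  rw [show -lam - -mu = -(lam - mu) by ring, inv_neg]
  ring

theorem g_conv {lam mu : ℂ} (hl : lam.re ≠ 0) (hm : mu.re ≠ 0) (hne : lam ≠ mu) {t : ℝ}
    (ht : t ≠ 0) :
    Integrable (fun s : ℝ => g s lam * g (t - s) mu) ∧
      ∫ s, g s lam * g (t - s) mu = (g t lam - g t mu) * (lam - mu)⁻¹ := by
  rcases hl.lt_or_gt with hl | hl <;> rcases hm.lt_or_gt with hm | hm
  · exact g_conv_of_re_neg_of_re_neg hl hm hne t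
  · exact g_conv_of_re_neg_of_re_pos hl hm ht
  · exact g_conv_of_g_conv_neg <|
      g_conv_of_re_neg_of_re_pos (by simpa) (by simpa) (neg_ne_zero.2 ht)
  · exact g_conv_of_g_conv_neg <|
      g_conv_of_re_neg_of_re_neg (by simpa) (by simpa) (neg_inj.not.2 hne) _

/-- For pairwise distinct `λ₀, …, λₙ` with nonzero real parts and `t ≠ 0`, the
convolution of the `(n−1)`-th divided difference of `g_·` at `λ₀, …, λ_{n−1}` with
`g_·(λₙ)` converges absolutely and equals the `n`-th divided difference at
`λ₀, …, λₙ`; i.e. the `n`-th divided difference of `g_t` is the `(n+1)`-fold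
convolution `g_·(λ₀) ∗ ⋯ ∗ g_·(λₙ)`. -/
theorem stmt_12 (n : ℕ) (hn : 1 ≤ n) (lam : ℕ → ℂ)
    (hdist : ∀ j k : ℕ, j ≤ n → k ≤ n → j ≠ k → lam j ≠ lam k)
    (hre : ∀ j : ℕ, j ≤ n → (lam j).re ≠ 0)
    (t : ℝ) (ht : t ≠ 0) :
    Integrable (fun s : ℝ => hg lam (n - 1) s * g (t - s) (lam n)) ∧
    ∫ s : ℝ, hg lam (n - 1) s * g (t - s) (lam n) = hg lam n t := by
  obtain ⟨m, rfl⟩ : ∃ m, n = m + 1 := ⟨n - 1, by omega⟩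
  have hinj : Set.InjOn lam (range (m + 1 + 1)) := fun j hj k hk => by
    simp only [coe_range, Set.mem_Iio] at hj hk
    exact not_imp_not.1 (hdist j k (by omega) (by omega))
  have hconv (j : ℕ) (hj : j ∈ range (m + 1)) :
      Integrable (fun s : ℝ => g s (lam j) * g (t - s) (lam (m + 1))) ∧
        ∫ s, g s (lam j) * g (t - s) (lam (m + 1)) =
          (g t (lam j) - g t (lam (m + 1))) * (lam j - lam (m + 1))⁻¹ := by
    have hjm : j < m + 1 := mem_range.1 hj
    exact g_conv (hre j (by omega)) (hre _ le_rfl) (hdist _ _ (by omega) le_rfl (by omega)) ht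
  have hfun : (fun s : ℝ => hg lam m s * g (t - s) (lam (m + 1))) = fun s =>
      ∑ j ∈ range (m + 1), g s (lam j) * g (t - s) (lam (m + 1)) *
        ∏ k ∈ (range (m + 1)).erase j, (lam j - lam k)⁻¹ := by
    ext s
    simp only [hg, sum_mul, mul_right_comm]
  simp only [Nat.add_sub_cancel, hfun]
  refine ⟨integrable_finsetSum _ fun j hj => (hconv j hj).1.mul_const _, ?_⟩
  rw [integral_finsetSum _ fun j hj => (hconv j hj).1.mul_const _, hg,
    sum_mul_prod_sub_inv_range_succ _ (by omega) hinj]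
  exact sum_congr rfl fun j hj => by rw [integral_mul_const, (hconv j hj).2]
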